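/- Let Γ be a group, Γ₀ a finite-index normal subgroup, and γ ∈ Γ a virtually unipotent element of Γ. Let γ₀ be a generator of the cyclic group ⟨γ⟩ ∩ Γ₀. Then γ₀ is a virtually unipotent element of Γ₀. -/

import Mathlib

/-!
The generator `γ₀` is a power `γ ^ k`, and over an algebraically closed field the eigenvalues
of `A ^ k` are the `k`-th powers of those of `A` (for `k < 0`, inverses of such powers), so `γ₀`
is virtually unipotent as an element of `Γ`. To pass to `Γ₀`, coinduce a representation `ρ` of
`Γ₀` to `Γ`: the coinduced module is finite-dimensional because `[Γ : Γ₀] < ∞`, and evaluation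
at `1` is a `Γ₀`-equivariant surjection from it onto `ρ`. Hence every eigenvalue of `ρ γ₀` is
an eigenvalue of a finite-dimensional representation of `Γ` at `γ₀`.
-/

/-- An element `γ` of a group `Γ` is virtually unipotent if every finite-dimensional
linear representation of `Γ` (over any field) sends `γ` to a matrix all of whose
eigenvalues, over the algebraic closure, are roots of unity. -/
def IsVirtuallyUnipotent {Γ : Type*} [Group Γ] (γ : Γ) : Prop :=
  ∀ (F : Type) (_ : Field F) (n : ℕ) (ρ : Γ →* GL (Fin n) F)
    (μ : AlgebraicClosure F),
    (((ρ γ : Matrix (Fin n) (Fin n) F)).map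
      (algebraMap F (AlgebraicClosure F))).charpoly.IsRoot μ →
    ∃ m : ℕ, 0 < m ∧ μ ^ m = 1

theorem IsOfFinOrder.of_inv₀ {K : Type*} [GroupWithZero K] {x : K} (h : IsOfFinOrder x⁻¹) :
    IsOfFinOrder x := by
  obtain ⟨n, hn, hx⟩ := h.exists_pow_eq_one
  exact isOfFinOrder_iff_pow_eq_one.mpr ⟨n, hn, by rwa [inv_pow, inv_eq_one] at hx⟩

theorem spectrum.isOfFinOrder_of_mem_zpow {K A : Type*} [Field K] [IsAlgClosed K] [Ring A]
    [Algebra K A] {u : Aˣ} (hu : ∀ ν ∈ spectrum K (u : A), IsOfFinOrder ν) {μ : K} :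
    ∀ k : ℤ, μ ∈ spectrum K ((u ^ k : Aˣ) : A) → IsOfFinOrder μ
  | .ofNat 0, hμ => by
    rw [Int.ofNat_eq_natCast, Nat.cast_zero, zpow_zero, Units.val_one] at hμ
    rcases subsingleton_or_nontrivial A with _ | _
    · simp [spectrum.of_subsingleton] at hμ
    · rw [spectrum.one_eq, Set.mem_singleton_iff] at hμ
      exact hμ ▸ IsOfFinOrder.one
  | .ofNat (n + 1), hμ => by
    rw [Int.ofNat_eq_natCast, zpow_natCast, Units.val_pow_eq_pow_val,
      spectrum.map_pow_of_pos _ n.succ_pos] at hμ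
    obtain ⟨ν, hν, rfl⟩ := hμ
    exact (hu ν hν).pow
  | .negSucc n, hμ => by
    rw [zpow_negSucc, ← spectrum.map_inv, Set.mem_inv, Units.val_pow_eq_pow_val,
      spectrum.map_pow_of_pos _ n.succ_pos] at hμ
    obtain ⟨ν, hν, hνμ⟩ := hμ
    exact IsOfFinOrder.of_inv₀ (hνμ ▸ (hu ν hν).pow)

theorem Matrix.spectrum_subset_of_intertwines {K m n : Type*} [CommRing K]
    [Fintype m] [DecidableEq m] [Fintype n] [DecidableEq n]
    {A : Matrix m m K} {B : Matrix n n K} {P : Matrix n m K} {R : Matrix m n K}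
    (hPR : P * R = 1) (hPA : P * A = B * P) : spectrum K B ⊆ spectrum K A := by
  intro μ hμ
  rw [spectrum.mem_iff] at hμ ⊢
  contrapose! hμ
  obtain ⟨C, hC⟩ := hμ.exists_right_inv
  have hP : (algebraMap K _ μ - B) * P = P * (algebraMap K _ μ - A) := by
    rw [Matrix.sub_mul, Matrix.mul_sub, ← hPA, Algebra.algebraMap_eq_smul_one,
      Algebra.algebraMap_eq_smul_one, Matrix.smul_mul, Matrix.mul_smul, Matrix.one_mul,
      Matrix.mul_one]
  refine IsUnit.of_mul_eq_one (P * C * R) ?_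
  rw [← Matrix.mul_assoc, ← Matrix.mul_assoc, hP, Matrix.mul_assoc P, hC, Matrix.mul_one, hPR]

namespace Representation

section Semiring

variable {k G V : Type*} [Semiring k] [Group G] [AddCommMonoid V] [Module k V]
  {H : Subgroup G} (ρ : Representation k H V)

def coindEvalOne : coindV H.subtype ρ →ₗ[k] V :=
  (LinearMap.proj 1).comp (coindV H.subtype ρ).subtype

theorem coindEvalOne_comp_coind (h : H) :
    ρ.coindEvalOne ∘ₗ coind H.subtype ρ h = ρ h ∘ₗ ρ.coindEvalOne := by
  ext ⟨f, hf⟩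
  show f (1 * h) = ρ h (f 1)
  simpa using hf h 1

open scoped Classical in
noncomputable def coindExtendByZero : V →ₗ[k] coindV H.subtype ρ where
  toFun v := ⟨fun x => if hx : x ∈ H then ρ ⟨x, hx⟩ v else 0, by
    intro h x
    by_cases hx : x ∈ H
    · dsimp only [Subgroup.subtype_apply]
      rw [dif_pos hx, dif_pos (H.mul_mem h.2 hx)]
      exact congr($(map_mul ρ h ⟨x, hx⟩) v)
    · simp [hx, H.mul_mem_cancel_left h.2]⟩
  map_add' v w := by ext x; by_cases hx : x ∈ H <;> simp [hx]
  map_smul' c v := by ext; simp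

theorem coindEvalOne_comp_coindExtendByZero :
    ρ.coindEvalOne ∘ₗ ρ.coindExtendByZero = .id := by
  ext v
  classical
  show (if hx : (1 : G) ∈ H then ρ ⟨1, hx⟩ v else 0) = v
  rw [dif_pos H.one_mem]
  exact congr($(map_one ρ) v)

end Semiring

instance {k G V : Type*} [Ring k] [IsNoetherianRing k] [Group G] [AddCommGroup V]
    [Module k V] [Module.Finite k V] {H : Subgroup G} [H.FiniteIndex]
    (ρ : Representation k H V) : Module.Finite k (coindV H.subtype ρ) := by
  -- `f (s * x) = ρ s (f x)` for `s ∈ H`, so `f` is determined by its values at the inverses of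
  -- representatives of the left cosets of `H`.
  let restrictToTransversal : coindV H.subtype ρ →ₗ[k] (G ⧸ H → V) :=
    LinearMap.pi fun q => LinearMap.proj q.out⁻¹ ∘ₗ (coindV H.subtype ρ).subtype
  refine Module.Finite.of_injective restrictToTransversal <|
    (injective_iff_map_eq_zero _).mpr fun ⟨f, hf⟩ hzero => Subtype.ext <| funext fun x => ?_
  obtain ⟨s, hs⟩ := QuotientGroup.mk_out_eq_mul H x⁻¹
  have hsx : f ((s : G)⁻¹ * x) = 0 := by
    simpa [restrictToTransversal, hs] using congr_fun hzero (x⁻¹ : G)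
  simpa [hsx] using hf s (s⁻¹ * x)

end Representation

open Representation in
theorem Subgroup.exists_rep_intertwining_onto {G : Type*} [Group G] (H : Subgroup G)
    [H.FiniteIndex] {F : Type*} [Field F] {n : ℕ} (ρ : H →* GL (Fin n) F) :
    ∃ (m : ℕ) (σ : G →* GL (Fin m) F) (P : Matrix (Fin n) (Fin m) F)
      (R : Matrix (Fin m) (Fin n) F), P * R = 1 ∧
        ∀ h : H, P * (σ h : Matrix (Fin m) (Fin m) F) =
          (ρ h : Matrix (Fin n) (Fin n) F) * P := by
  let ρ' : Representation F H (Fin n → F) :=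
    Matrix.toLinAlgEquiv'.toMonoidHom.comp ((Units.coeHom _).comp ρ)
  let b := Module.finBasis F (coindV H.subtype ρ')
  let e := Pi.basisFun F (Fin n)
  refine ⟨_, ((LinearMap.toMatrixAlgEquiv b).toMonoidHom.comp (coind H.subtype ρ')).toHomUnits,
    LinearMap.toMatrix b e ρ'.coindEvalOne, LinearMap.toMatrix e b ρ'.coindExtendByZero,
    ?_, fun h => ?_⟩
  · rw [← LinearMap.toMatrix_comp, coindEvalOne_comp_coindExtendByZero, LinearMap.toMatrix_id]
  · change LinearMap.toMatrix b e ρ'.coindEvalOne *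
      LinearMap.toMatrix b b (coind H.subtype ρ' h) = _
    rw [← LinearMap.toMatrix_comp, coindEvalOne_comp_coind, LinearMap.toMatrix_comp _ e,
      LinearMap.toMatrix_eq_toMatrix']
    congr
    exact LinearMap.toMatrix'_toLin' _

theorem isVirtuallyUnipotent_iff {Γ : Type*} [Group Γ] (γ : Γ) :
    IsVirtuallyUnipotent γ ↔ ∀ (F : Type) [Field F] (n : ℕ) (ρ : Γ →* GL (Fin n) F),
      ∀ μ ∈ spectrum (AlgebraicClosure F)
        ((ρ γ : Matrix (Fin n) (Fin n) F).map (algebraMap F (AlgebraicClosure F))),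
        IsOfFinOrder μ := by
  simp only [IsVirtuallyUnipotent, Matrix.mem_spectrum_iff_isRoot_charpoly,
    isOfFinOrder_iff_pow_eq_one]

theorem IsVirtuallyUnipotent.zpow {Γ : Type*} [Group Γ] {γ : Γ} (hγ : IsVirtuallyUnipotent γ)
    (k : ℤ) : IsVirtuallyUnipotent (γ ^ k) := by
  rw [isVirtuallyUnipotent_iff] at hγ ⊢
  intro F _ n ρ μ hμ
  let ρbar : Γ →* GL (Fin n) (AlgebraicClosure F) :=
    (Units.map (algebraMap F (AlgebraicClosure F)).mapMatrix.toMonoidHom).comp ρ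
  exact spectrum.isOfFinOrder_of_mem_zpow (hγ F n ρ) k (by rwa [← map_zpow ρbar])

theorem IsVirtuallyUnipotent.to_subgroup {Γ : Type*} [Group Γ] {H : Subgroup Γ} [H.FiniteIndex]
    {g : Γ} (hg : IsVirtuallyUnipotent g) (hgH : g ∈ H) :
    IsVirtuallyUnipotent (⟨g, hgH⟩ : H) := by
  rw [isVirtuallyUnipotent_iff] at hg ⊢
  intro F _ n ρ μ hμ
  obtain ⟨m, σ, P, R, hPR, hPσ⟩ := H.exists_rep_intertwining_onto ρ
  let f := algebraMap F (AlgebraicClosure F)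
  refine hg F m σ μ <|
    Matrix.spectrum_subset_of_intertwines (P := P.map f) (R := R.map f) ?_ ?_ hμ
  · rw [← Matrix.map_mul, hPR, Matrix.map_one _ (map_zero f) (map_one f)]
  · rw [← Matrix.map_mul, ← Matrix.map_mul, hPσ ⟨g, hgH⟩]

theorem virtually_unipotent_generator_in_finite_index_normal_subgroup_general
    {Γ : Type*} [Group Γ] (Γ₀ : Subgroup Γ) (hfi : Γ₀.index ≠ 0)
    (γ : Γ) (hγ : IsVirtuallyUnipotent γ)
    (γ₀ : Γ) (hmem : γ₀ ∈ Γ₀)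
    (hgen : Subgroup.zpowers γ₀ = Subgroup.zpowers γ ⊓ Γ₀) :
    IsVirtuallyUnipotent (⟨γ₀, hmem⟩ : Γ₀) := by
  obtain ⟨k, rfl⟩ := Subgroup.mem_zpowers_iff.mp (hgen.le (Subgroup.mem_zpowers γ₀)).1
  have : Γ₀.FiniteIndex := ⟨hfi⟩
  exact (hγ.zpow k).to_subgroup hmem

/-- If `Γ₀` is a finite-index normal subgroup of `Γ` and `γ ∈ Γ` is virtually unipotent,
then a generator `γ₀` of `⟨γ⟩ ∩ Γ₀` is virtually unipotent as an element of `Γ₀`. -/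
theorem virtually_unipotent_generator_in_finite_index_normal_subgroup
    {Γ : Type*} [Group Γ] (Γ₀ : Subgroup Γ) [Γ₀.Normal] (hfi : Γ₀.index ≠ 0)
    (γ : Γ) (hγ : IsVirtuallyUnipotent γ)
    (γ₀ : Γ) (hmem : γ₀ ∈ Γ₀)
    (hgen : Subgroup.zpowers γ₀ = Subgroup.zpowers γ ⊓ Γ₀) :
    IsVirtuallyUnipotent (⟨γ₀, hmem⟩ : Γ₀) :=
  virtually_unipotent_generator_in_finite_index_normal_subgroup_general Γ₀ hfi γ hγ γ₀ hmem hgen
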